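/- arXiv:math/0610635 — 3 statements merged into one kernel-verified Lean document; each statement's English description precedes it below -/
import Mathlib

section
/- A bounded operator X: H²_U(F_d) → H²_Y(F_d) satisfies S_j^Y X = X S_j^U for all j = 1,...,d (where S_j denotes the right shift) if and only if X = M_S is the left-multiplication operator by some operator-valued formal power series S = Σ_{α∈F_d} s_α z^α with s_α ∈ L(U,Y). -/
/-!
Since `u ⊗ z^β` arises from `u ⊗ z^∅` by right shifts, an intertwiner `X` maps it to
the same shifts of `X (u ⊗ z^∅)`: the result is `(X (u ⊗ z^∅))_α` at the word `αβ` and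
vanishes at words that do not end in `β`. Expanding `f = Σ_β f_β ⊗ z^β` shows that `X` is left
multiplication by `s_α = (X (· ⊗ z^∅))_α`. Conversely, the convolution formula visibly
commutes with appending a letter on the right.
-/

noncomputable section
open scoped ENNReal

/-- The Fock space `H²_Y(F_d)`: square-summable `Y`-valued families indexed by words. -/
abbrev Fock (d : ℕ) (Y : Type*) [NormedAddCommGroup Y] [InnerProductSpace ℂ Y] :=
  lp (fun _ : List (Fin d) => Y) 2

theorem List.hasSum_sum_range_drop {α M : Type*} [AddCommMonoid M] [TopologicalSpace M]
    (v : List α) {g : List α → M} (hg : ∀ β, ¬ β <:+ v → g β = 0) :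
    HasSum g (∑ i ∈ Finset.range (v.length + 1), g (v.drop i)) := by
  classical
  have hinj : Set.InjOn v.drop (Finset.range (v.length + 1)) := by
    intro i hi k hk h
    have := congrArg List.length h
    simp only [Finset.coe_range, Set.mem_Iio, List.length_drop] at hi hk this
    omega
  rw [← Finset.sum_image hinj]
  refine hasSum_sum_of_ne_finset_zero fun β hβ => hg β fun hsuf => hβ ?_
  exact Finset.mem_image.2 ⟨v.length - β.length, by simp only [Finset.mem_range]; omega,
    (List.suffix_iff_eq_drop.1 hsuf).symm⟩

namespace Fock

variable {d : ℕ} {U Y : Type*}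
  [NormedAddCommGroup U] [InnerProductSpace ℂ U] [NormedAddCommGroup Y] [InnerProductSpace ℂ Y]

structure IsRightShift (j : Fin d) (S : Fock d U → Fock d U) : Prop where
  apply_append_singleton : ∀ (f : Fock d U) (v : List (Fin d)), S f (v ++ [j]) = f v
  apply_of_forall_ne : ∀ (f : Fock d U) (w : List (Fin d)), (∀ v, w ≠ v ++ [j]) → S f w = 0

/-- `(S · f)_v = Σ_{αβ = v} s_α f_β`. -/
def convolution (s : List (Fin d) → U →L[ℂ] Y) (f : List (Fin d) → U) (v : List (Fin d)) :
    Y :=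
  ∑ i ∈ Finset.range (v.length + 1), s (v.take i) (f (v.drop i))

def symbol (X : Fock d U →L[ℂ] Fock d Y) (α : List (Fin d)) : U →L[ℂ] Y :=
  (lp.evalCLM ℂ _ 2 α).comp (X.comp (lp.singleContinuousLinearMap ℂ _ 2 []))

theorem symbol_apply (X : Fock d U →L[ℂ] Fock d Y) (α : List (Fin d)) (u : U) :
    symbol X α u = X (lp.single 2 [] u) α :=
  rfl

namespace IsRightShift

variable {j : Fin d} {S : Fock d U → Fock d U}

theorem apply_of_not_suffix (hS : IsRightShift j S) (f : Fock d U) {w : List (Fin d)}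
    (hw : ¬ [j] <:+ w) : S f w = 0 :=
  hS.apply_of_forall_ne f w fun v hv => hw (List.suffix_iff_exists_eq_append.2 ⟨v, hv⟩)

theorem apply_single (hS : IsRightShift j S) (β : List (Fin d)) (u : U) :
    S (lp.single 2 β u) = lp.single 2 (β ++ [j]) u := by
  ext w : 2
  by_cases hw : [j] <:+ w
  · obtain ⟨v, rfl⟩ := List.suffix_iff_exists_eq_append.1 hw
    simp [hS.apply_append_singleton, Pi.single_apply]
  · rw [hS.apply_of_not_suffix _ hw, lp.single_apply_ne]
    rintro rfl
    exact hw (List.suffix_append _ _)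

theorem convolution_apply_append_singleton (hS : IsRightShift j S)
    (s : List (Fin d) → U →L[ℂ] Y) (f : Fock d U) (v : List (Fin d)) :
    convolution s (S f) (v ++ [j]) = convolution s f v := by
  have hnil : S f [] = 0 := hS.apply_of_not_suffix f (by simp)
  rw [convolution, List.length_append, List.length_singleton, Finset.sum_range_succ,
    List.drop_of_length_le (by simp), hnil, map_zero, add_zero]
  refine Finset.sum_congr rfl fun i hi => ?_
  have hi : i ≤ v.length := Nat.lt_succ_iff.1 (Finset.mem_range.1 hi)
  rw [List.take_append_of_le_length hi, List.drop_append_of_le_length hi,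
    hS.apply_append_singleton]

theorem convolution_apply_of_not_suffix (hS : IsRightShift j S)
    (s : List (Fin d) → U →L[ℂ] Y) (f : Fock d U) {w : List (Fin d)} (hw : ¬ [j] <:+ w) :
    convolution s (S f) w = 0 :=
  Finset.sum_eq_zero fun i _ => by
    rw [hS.apply_of_not_suffix f fun h => hw (h.trans (List.drop_suffix i w)), map_zero]

end IsRightShift

section Intertwiner

variable {SU : Fin d → Fock d U → Fock d U} {SY : Fin d → Fock d Y → Fock d Y}
  {X : Fock d U →L[ℂ] Fock d Y}

theorem apply_single_append
    (hU : ∀ j, IsRightShift j (SU j)) (hY : ∀ j, IsRightShift j (SY j))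
    (hX : ∀ j f, SY j (X f) = X (SU j f)) (α β : List (Fin d)) (u : U) :
    X (lp.single 2 β u) (α ++ β) = X (lp.single 2 [] u) α := by
  induction β using List.reverseRecOn with
  | nil => rw [List.append_nil]
  | append_singleton β j ih =>
    rw [← (hU j).apply_single, ← hX, ← List.append_assoc, (hY j).apply_append_singleton, ih]

theorem apply_single_of_not_suffix
    (hU : ∀ j, IsRightShift j (SU j)) (hY : ∀ j, IsRightShift j (SY j))
    (hX : ∀ j f, SY j (X f) = X (SU j f))
    {β w : List (Fin d)} (h : ¬ β <:+ w) (u : U) : X (lp.single 2 β u) w = 0 := by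
  induction β using List.reverseRecOn generalizing w with
  | nil => exact absurd List.nil_suffix h
  | append_singleton β j ih =>
    rw [← (hU j).apply_single, ← hX]
    by_cases hw : [j] <:+ w
    · obtain ⟨v, rfl⟩ := List.suffix_iff_exists_eq_append.1 hw
      rw [(hY j).apply_append_singleton]
      exact ih fun hv => h (List.suffix_append_self_iff.2 hv)
    · exact (hY j).apply_of_not_suffix _ hw

theorem apply_eq_convolution_symbol
    (hU : ∀ j, IsRightShift j (SU j)) (hY : ∀ j, IsRightShift j (SY j))
    (hX : ∀ j f, SY j (X f) = X (SU j f))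
    (f : Fock d U) (v : List (Fin d)) : X f v = convolution (symbol X) f v := by
  have hsum : HasSum (fun β => X (lp.single 2 β (f β)) v) (X f v) :=
    ((lp.hasSum_single ENNReal.ofNat_ne_top f).mapL X).mapL (lp.evalCLM ℂ _ 2 v)
  have hterm : ∀ i, X (lp.single 2 (v.drop i) (f (v.drop i))) v =
      symbol X (v.take i) (f (v.drop i)) := fun i => by
    rw [symbol_apply, ← apply_single_append hU hY hX, List.take_append_drop]
  have hsuffix := v.hasSum_sum_range_drop (g := fun β => X (lp.single 2 β (f β)) v)
    fun β hβ => apply_single_of_not_suffix hU hY hX hβ _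
  rw [Finset.sum_congr rfl fun i _ => hterm i] at hsuffix
  exact hsum.unique hsuffix

theorem intertwines_of_eq_convolution
    (hU : ∀ j, IsRightShift j (SU j)) (hY : ∀ j, IsRightShift j (SY j))
    {s : List (Fin d) → U →L[ℂ] Y}
    (hX : ∀ f v, X f v = convolution s f v) (j : Fin d) (f : Fock d U) :
    SY j (X f) = X (SU j f) := by
  ext w : 2
  by_cases hw : [j] <:+ w
  · obtain ⟨v, rfl⟩ := List.suffix_iff_exists_eq_append.1 hw
    rw [(hY j).apply_append_singleton, hX, hX, (hU j).convolution_apply_append_singleton]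
  · rw [(hY j).apply_of_not_suffix _ hw, hX, (hU j).convolution_apply_of_not_suffix _ _ hw]

end Intertwiner

end Fock

theorem intertwiner_iff_multiplier_general {d : ℕ} {U Y : Type*}
    [NormedAddCommGroup U] [InnerProductSpace ℂ U]
    [NormedAddCommGroup Y] [InnerProductSpace ℂ Y]
    (SU : Fin d → Fock d U →L[ℂ] Fock d U)
    (hSU : ∀ (j : Fin d) (f : Fock d U) (v : List (Fin d)), (SU j f) (v ++ [j]) = f v)
    (hSU0 : ∀ (j : Fin d) (f : Fock d U) (w : List (Fin d)),
      (∀ v : List (Fin d), w ≠ v ++ [j]) → (SU j f) w = 0)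
    (SY : Fin d → Fock d Y →L[ℂ] Fock d Y)
    (hSY : ∀ (j : Fin d) (f : Fock d Y) (v : List (Fin d)), (SY j f) (v ++ [j]) = f v)
    (hSY0 : ∀ (j : Fin d) (f : Fock d Y) (w : List (Fin d)),
      (∀ v : List (Fin d), w ≠ v ++ [j]) → (SY j f) w = 0)
    (X : Fock d U →L[ℂ] Fock d Y) :
    (∀ j : Fin d, (SY j).comp X = X.comp (SU j)) ↔
    ∃ s : List (Fin d) → (U →L[ℂ] Y),
      ∀ (f : Fock d U) (v : List (Fin d)),
        (X f) v = ∑ i ∈ Finset.range (v.length + 1), s (v.take i) (f (v.drop i)) := by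
  have hU : ∀ j, Fock.IsRightShift j (SU j) := fun j => ⟨hSU j, hSU0 j⟩
  have hY : ∀ j, Fock.IsRightShift j (SY j) := fun j => ⟨hSY j, hSY0 j⟩
  constructor
  · intro hX
    exact ⟨Fock.symbol X,
      Fock.apply_eq_convolution_symbol hU hY fun j f => DFunLike.congr_fun (hX j) f⟩
  · rintro ⟨s, hs⟩ j
    ext f : 1
    exact Fock.intertwines_of_eq_convolution hU hY hs j f

/-- a bounded operator `X : H²_U(F_d) → H²_Y(F_d)` intertwines the right
shifts (`S_j^Y X = X S_j^U` for all `j`) if and only if `X = M_S` is left multiplication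
by an operator-valued formal power series `S = Σ_α s_α z^α`, i.e. for all `f` and `v`,
`(X f)_v = Σ_{αβ = v} s_α f_β`. -/
theorem intertwiner_iff_multiplier {d : ℕ} {U Y : Type*}
    [NormedAddCommGroup U] [InnerProductSpace ℂ U] [CompleteSpace U]
    [NormedAddCommGroup Y] [InnerProductSpace ℂ Y] [CompleteSpace Y]
    (SU : Fin d → Fock d U →L[ℂ] Fock d U)
    (hSU : ∀ (j : Fin d) (f : Fock d U) (v : List (Fin d)), (SU j f) (v ++ [j]) = f v)
    (hSU0 : ∀ (j : Fin d) (f : Fock d U) (w : List (Fin d)),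
      (∀ v : List (Fin d), w ≠ v ++ [j]) → (SU j f) w = 0)
    (SY : Fin d → Fock d Y →L[ℂ] Fock d Y)
    (hSY : ∀ (j : Fin d) (f : Fock d Y) (v : List (Fin d)), (SY j f) (v ++ [j]) = f v)
    (hSY0 : ∀ (j : Fin d) (f : Fock d Y) (w : List (Fin d)),
      (∀ v : List (Fin d), w ≠ v ++ [j]) → (SY j f) w = 0)
    (X : Fock d U →L[ℂ] Fock d Y) :
    (∀ j : Fin d, (SY j).comp X = X.comp (SU j)) ↔
    ∃ s : List (Fin d) → (U →L[ℂ] Y),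
      ∀ (f : Fock d U) (v : List (Fin d)),
        (X f) v = ∑ i ∈ Finset.range (v.length + 1), s (v.take i) (f (v.drop i)) :=
  intertwiner_iff_multiplier_general SU hSU hSU0 SY hSY hSY0 X
end
end

section
/- Let A_1,...,A_d and C be bounded operators with A_j: X → X and C: X → Y such that Σ_{j=1}^d A_j*A_j + C*C ≤ I. Then for every x ∈ X the observability operator O_{C,A}: x ↦ (C A^v x)_{v∈F_d} maps X contractively into the Fock space H²_Y(F_d), i.e., Σ_{v∈F_d} ‖C A^v x‖² ≤ ‖x‖². -/
noncomputable section

/-- The finite set of words of length `n` in `d` letters. -/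
def wordsOf (d : ℕ) : ℕ → Finset (List (Fin d))
  | 0 => {[]}
  | n + 1 => ((Finset.univ : Finset (Fin d)) ×ˢ wordsOf d n).image fun p => p.1 :: p.2

lemma mem_wordsOf {d : ℕ} : ∀ {n : ℕ} {v : List (Fin d)},
    v ∈ wordsOf d n ↔ v.length = n
  | 0, v => by cases v <;> simp [wordsOf]
  | n + 1, v => by
    cases v with
    | nil => simp [wordsOf]
    | cons j v => simp [wordsOf, List.cons.injEq, mem_wordsOf (n := n)]

lemma sum_wordsOf_succ {d n : ℕ} (f : List (Fin d) → ℝ) :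
    ∑ v ∈ wordsOf d (n + 1), f v = ∑ v ∈ wordsOf d n, ∑ j : Fin d, f (j :: v) := by
  rw [wordsOf, Finset.sum_image, Finset.sum_product, Finset.sum_comm]
  rintro ⟨a, b⟩ _ ⟨a', b'⟩ _ h
  simpa [Prod.ext_iff] using h

/-- if `(C, A)` is a contractive output pair
(`Σ_j A_j* A_j + C* C ≤ I`), then for every `x` the observability operator
`x ↦ (C A^v x)_{v ∈ F_d}` maps contractively into the Fock space:
`Σ_{v ∈ F_d} ‖C A^v x‖² ≤ ‖x‖²`.  Here `A^v = A_{i_N} ⋯ A_{i_1}` for the word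
`v = i_N ⋯ i_1`, realized as `(v.map A).prod`. -/
theorem observability_contractive {d : ℕ} {X Y : Type*}
    [NormedAddCommGroup X] [InnerProductSpace ℂ X] [CompleteSpace X]
    [NormedAddCommGroup Y] [InnerProductSpace ℂ Y] [CompleteSpace Y]
    (A : Fin d → X →L[ℂ] X) (C : X →L[ℂ] Y)
    (hcontr : (1 - (∑ j : Fin d, (ContinuousLinearMap.adjoint (A j)).comp (A j))
        - (ContinuousLinearMap.adjoint C).comp C).IsPositive) :
    ∀ x : X,
      Summable (fun v : List (Fin d) => ‖C (((v.map A).prod) x)‖ ^ 2) ∧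
      ∑' v : List (Fin d), ‖C (((v.map A).prod) x)‖ ^ 2 ≤ ‖x‖ ^ 2 := by
  -- The key pointwise inequality coming from contractivity.
  have key : ∀ y : X, ‖C y‖ ^ 2 + ∑ j : Fin d, ‖A j y‖ ^ 2 ≤ ‖y‖ ^ 2 := by
    intro y
    have h := hcontr.2 y
    rw [ContinuousLinearMap.reApplyInnerSelf] at h
    simp only [ContinuousLinearMap.sub_apply, ContinuousLinearMap.one_apply,
      ContinuousLinearMap.sum_apply, ContinuousLinearMap.comp_apply,
      inner_sub_left, sum_inner, ContinuousLinearMap.adjoint_inner_left,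
      inner_self_eq_norm_sq_to_K, ← RCLike.ofReal_pow, RCLike.ofReal_re,
      map_sub, map_sum] at h
    linarith
  intro x
  set F : List (Fin d) → ℝ := fun v => ‖C (((v.map A).prod) x)‖ ^ 2 with hF
  set G : ℕ → ℝ := fun n => ∑ v ∈ wordsOf d n, ‖((v.map A).prod) x‖ ^ 2 with hG
  have hFnonneg : ∀ v, 0 ≤ F v := fun v => sq_nonneg _
  have hGnonneg : ∀ n, 0 ≤ G n := fun n =>
    Finset.sum_nonneg fun v _ => sq_nonneg _
  -- one-step estimate
  have step : ∀ n, (∑ v ∈ wordsOf d n, F v) + G (n + 1) ≤ G n := by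
    intro n
    have hsucc : G (n + 1)
        = ∑ v ∈ wordsOf d n, ∑ j : Fin d, ‖A j (((v.map A).prod) x)‖ ^ 2 := by
      show (∑ v ∈ wordsOf d (n+1), ‖((v.map A).prod) x‖ ^ 2) = _
      rw [sum_wordsOf_succ (fun v => ‖((v.map A).prod) x‖ ^ 2)]
      refine Finset.sum_congr rfl fun v _ => Finset.sum_congr rfl fun j _ => ?_
      simp [List.prod_cons, ContinuousLinearMap.mul_apply]
    rw [hsucc, ← Finset.sum_add_distrib]
    exact Finset.sum_le_sum fun v _ => key _
  -- partial sums over all words of length < N are bounded by ‖x‖²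
  have bound : ∀ N : ℕ, (∑ n ∈ Finset.range N, ∑ v ∈ wordsOf d n, F v) + G N ≤ ‖x‖ ^ 2 := by
    intro N
    induction N with
    | zero => simp [hG, wordsOf]
    | succ N ih =>
      rw [Finset.sum_range_succ]
      have := step N
      linarith
  have bound' : ∀ N : ℕ, ∑ n ∈ Finset.range N, ∑ v ∈ wordsOf d n, F v ≤ ‖x‖ ^ 2 := by
    intro N
    have := bound N
    have := hGnonneg N
    linarith
  -- disjointness of the word-length levels
  have hdisj : ∀ N : ℕ, (↑(Finset.range N) : Set ℕ).Pairwise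
      (Function.onFun Disjoint (wordsOf d)) := by
    intro N m _ n _ hmn
    simp only [Function.onFun, Finset.disjoint_left]
    intro v hvm hvn
    exact hmn ((mem_wordsOf.mp hvm).symm.trans (mem_wordsOf.mp hvn))
  -- any finite set of words has F-sum bounded by ‖x‖²
  have hfin : ∀ u : Finset (List (Fin d)), ∑ v ∈ u, F v ≤ ‖x‖ ^ 2 := by
    intro u
    set N : ℕ := u.sup (fun v => v.length) + 1 with hN
    have hsub : u ⊆ (Finset.range N).biUnion (wordsOf d) := by
      intro v hv
      refine Finset.mem_biUnion.mpr ⟨v.length, ?_, mem_wordsOf.mpr rfl⟩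
      exact Finset.mem_range.mpr (Nat.lt_succ_of_le (Finset.le_sup hv))
    calc ∑ v ∈ u, F v
        ≤ ∑ v ∈ (Finset.range N).biUnion (wordsOf d), F v :=
          Finset.sum_le_sum_of_subset_of_nonneg hsub fun v _ _ => hFnonneg v
      _ = ∑ n ∈ Finset.range N, ∑ v ∈ wordsOf d n, F v :=
          Finset.sum_biUnion (hdisj N)
      _ ≤ ‖x‖ ^ 2 := bound' N
  have hsummable : Summable F := summable_of_sum_le hFnonneg hfin
  exact ⟨hsummable, Summable.tsum_le_of_sum_le hsummable hfin⟩
end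
end

section
/- Let U = [[A,B],[C,D]]: X ⊕ U → X^d ⊕ Y be a contraction, where A = col(A_1,...,A_d), B = col(B_1,...,B_d). Define the transfer function S(z) = D + Σ_{j=1}^d Σ_{v∈F_d} C A^v B_j z^{v·j} as a formal power series. Then the multiplication operator M_S is a contraction from H²_U(F_d) to H²_Y(F_d); i.e., S belongs to the noncommutative Schur class. -/
/-!
Run the colligation as a noncommutative system along words: the state is `x(∅) = 0`,
`x(j :: v) = A_j x(v) + B_j f(v)`, and the output `C x(v) + D f(v)` is exactly `(M_S f)(v)`.
Contractivity of the colligation at `(x(v), f(v))` says that the energy `‖x‖²` passed on to the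
extensions `j :: v` plus the output energy at `v` is at most `‖x(v)‖² + ‖f(v)‖²`. Summing over words
of length `< N` telescopes, because `x(∅) = 0`, and bounds the output energy by the input energy.
-/

open Finset

namespace Words

def ofLength (α : Type*) [Fintype α] (n : ℕ) : Finset (List α) :=
  (univ : Finset (Fin n → α)).map ⟨List.ofFn, List.ofFn_injective⟩

variable {α : Type*} [Fintype α]

lemma mem_ofLength {n : ℕ} {v : List α} : v ∈ ofLength α n ↔ v.length = n := by
  constructor
  · intro hv
    obtain ⟨t, -, rfl⟩ := Finset.mem_map.1 hv
    exact List.length_ofFn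
  · rintro rfl
    exact Finset.mem_map.2 ⟨v.get, mem_univ _, List.ofFn_get v⟩

lemma sum_ofLength_succ {M : Type*} [AddCommMonoid M] (h : List α → M) (n : ℕ) :
    ∑ v ∈ ofLength α (n + 1), h v = ∑ v ∈ ofLength α n, ∑ a, h (a :: v) := by
  simp only [ofLength, sum_map, Function.Embedding.coeFn_mk]
  rw [← Fintype.sum_equiv (Fin.consEquiv fun _ ↦ α) (fun p ↦ h (p.1 :: List.ofFn p.2)) _
    fun p ↦ by simp [Fin.consEquiv, List.ofFn_succ], Fintype.sum_prod_type, sum_comm]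

variable [DecidableEq α]

variable (α) in
def below (N : ℕ) : Finset (List α) :=
  (range N).biUnion (ofLength α)

lemma mem_below {N : ℕ} {v : List α} : v ∈ below α N ↔ v.length < N := by
  simp [below, mem_ofLength]

lemma sum_below {M : Type*} [AddCommMonoid M] (h : List α → M) (N : ℕ) :
    ∑ v ∈ below α N, h v = ∑ n ∈ range N, ∑ v ∈ ofLength α n, h v :=
  sum_biUnion fun _ _ _ _ hmn ↦ disjoint_left.2 fun _ hm hn ↦
    hmn ((mem_ofLength.1 hm).symm.trans (mem_ofLength.1 hn))

lemma exists_subset_below (s : Finset (List α)) : ∃ N, s ⊆ below α N :=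
  ⟨s.sup List.length + 1, fun _ hv ↦ mem_below.2 (Nat.lt_succ_of_le (le_sup hv))⟩

lemma sum_below_le_of_dissipation {x g f : List α → ℝ} (hx : ∀ v, 0 ≤ x v)
    (hx_nil : x [] = 0) (hstep : ∀ v, ∑ a, x (a :: v) + g v ≤ x v + f v) (N : ℕ) :
    ∑ v ∈ below α N, g v ≤ ∑ v ∈ below α N, f v := by
  have telescope : ∀ N, ∑ v ∈ below α N, g v + ∑ v ∈ ofLength α N, x v
      ≤ ∑ v ∈ below α N, f v := by
    intro N
    induction N with
    | zero => simp [below, ofLength, hx_nil]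
    | succ N ih =>
      have level : ∑ v ∈ ofLength α (N + 1), x v + ∑ v ∈ ofLength α N, g v
          ≤ ∑ v ∈ ofLength α N, x v + ∑ v ∈ ofLength α N, f v := by
        rw [sum_ofLength_succ, ← sum_add_distrib, ← sum_add_distrib]
        exact sum_le_sum fun v _ ↦ hstep v
      simp only [sum_below, sum_range_succ] at ih ⊢
      linarith
  exact le_of_add_le_of_nonneg_left (telescope N) (sum_nonneg fun v _ ↦ hx v)

end Words

lemma List.take_add_one_ne_nil_of_lt {α : Type*} {v : List α} {i : ℕ} (hi : i < v.length) :
    v.take (i + 1) ≠ [] := by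
  simp [List.ne_nil_of_length_pos (Nat.zero_lt_of_lt hi)]

namespace Colligation

variable {R ι X U : Type*} [Semiring R]
  [AddCommMonoid X] [Module R X] [TopologicalSpace X]
  [AddCommMonoid U] [Module R U] [TopologicalSpace U]
  (A : ι → X →L[R] X) (B : ι → U →L[R] X)

/-- The coefficient `A^v B_j` of the word `v ++ [j]`, built from the first letter as `state` is. -/
def impulse : List ι → U →L[R] X
  | [] => 0
  | [j] => B j
  | k :: l :: v => (A k).comp (impulse (l :: v))

def state (f : List ι → U) : List ι → X
  | [] => 0
  | k :: v => A k (state f v) + B k (f v)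

lemma impulse_cons (k : ι) {v : List ι} (hv : v ≠ []) :
    impulse A B (k :: v) = (A k).comp (impulse A B v) := by
  cases v with
  | nil => exact absurd rfl hv
  | cons l w => rfl

lemma impulse_append_singleton (v : List ι) (j : ι) :
    impulse A B (v ++ [j]) = ((v.map A).prod).comp (B j) := by
  induction v with
  | nil => rfl
  | cons k w ih =>
    rw [List.cons_append, impulse_cons A B k (by simp), ih, List.map_cons, List.prod_cons]
    rfl

lemma state_eq_sum (f : List ι → U) (v : List ι) :
    state A B f v
      = ∑ i ∈ range v.length, impulse A B (v.take (i + 1)) (f (v.drop (i + 1))) := by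
  induction v with
  | nil => rfl
  | cons k w ih =>
    rw [List.length_cons, sum_range_succ']
    simp only [List.take_succ_cons, List.drop_succ_cons, List.take_zero, List.drop_zero]
    change A k (state A B f w) + B k (f w) = _
    rw [ih, map_sum]
    congr 1
    exact sum_congr rfl fun i hi ↦ by
      rw [impulse_cons A B k (List.take_add_one_ne_nil_of_lt (List.mem_range.1 hi))]; rfl

variable {Y : Type*} [AddCommMonoid Y] [Module R Y] [TopologicalSpace Y]

lemma sum_coeff_eq_output (C : X →L[R] Y) (D : U →L[R] Y) {s : List ι → U →L[R] Y}
    (hs0 : s [] = D) (hsv : ∀ v j, s (v ++ [j]) = C.comp (((v.map A).prod).comp (B j)))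
    (f : List ι → U) (v : List ι) :
    ∑ i ∈ range (v.length + 1), s (v.take i) (f (v.drop i)) = C (state A B f v) + D (f v) := by
  have hs : ∀ w, w ≠ [] → s w = C.comp (impulse A B w) := by
    intro w hw
    obtain ⟨u, j, rfl⟩ := List.eq_nil_or_concat w |>.resolve_left hw
    rw [List.concat_eq_append, hsv, impulse_append_singleton]
  rw [sum_range_succ', List.take_zero, List.drop_zero, hs0, state_eq_sum, map_sum]
  congr 1
  exact sum_congr rfl fun i hi ↦ by
    rw [hs _ (List.take_add_one_ne_nil_of_lt (List.mem_range.1 hi))]; rfl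

end Colligation

namespace lp

variable {ι : Type*} {E : ι → Type*} [∀ i, NormedAddCommGroup (E i)]

lemma sum_norm_sq_le_norm_sq (f : lp E 2) (s : Finset ι) : ∑ i ∈ s, ‖f i‖ ^ 2 ≤ ‖f‖ ^ 2 := by
  simpa [Real.rpow_two] using lp.sum_rpow_le_norm_rpow (by norm_num) f s

lemma exists_norm_le_of_sum_norm_sq_le (g : ∀ i, E i) {c : ℝ} (hc : 0 ≤ c)
    (hg : ∀ s : Finset ι, ∑ i ∈ s, ‖g i‖ ^ 2 ≤ c ^ 2) : ∃ g' : lp E 2, ⇑g' = g ∧ ‖g'‖ ≤ c := by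
  have hg' : ∀ s : Finset ι, ∑ i ∈ s, ‖g i‖ ^ (2 : ENNReal).toReal ≤ c ^ (2 : ENNReal).toReal := by
    simpa [Real.rpow_two] using hg
  exact ⟨⟨g, memℓp_gen' hg'⟩, rfl, lp.norm_le_of_forall_sum_le (by norm_num) hc hg'⟩

end lp

theorem transferFunction_schurClass_general {d : ℕ} {X U Y : Type*}
    [NormedAddCommGroup X] [InnerProductSpace ℂ X]
    [NormedAddCommGroup U] [InnerProductSpace ℂ U]
    [NormedAddCommGroup Y] [InnerProductSpace ℂ Y]
    (A : Fin d → X →L[ℂ] X) (B : Fin d → U →L[ℂ] X) (C : X →L[ℂ] Y) (D : U →L[ℂ] Y)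
    (hcontr : ∀ (x : X) (u : U),
      (∑ j : Fin d, ‖A j x + B j u‖ ^ 2) + ‖C x + D u‖ ^ 2 ≤ ‖x‖ ^ 2 + ‖u‖ ^ 2)
    (s : List (Fin d) → (U →L[ℂ] Y))
    (hs0 : s [] = D)
    (hsv : ∀ (v : List (Fin d)) (j : Fin d),
      s (v ++ [j]) = C.comp (((v.map A).prod).comp (B j))) :
    ∀ f : lp (fun _ : List (Fin d) => U) 2,
      ∃ g : lp (fun _ : List (Fin d) => Y) 2,
        (∀ v : List (Fin d),
          g v = ∑ i ∈ Finset.range (v.length + 1), s (v.take i) (f (v.drop i))) ∧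
        ‖g‖ ≤ ‖f‖ := by
  intro f
  set x := Colligation.state A B (f ·)
  set g : List (Fin d) → Y := fun v ↦ C (x v) + D (f v)
  have hbelow : ∀ N, ∑ v ∈ Words.below (Fin d) N, ‖g v‖ ^ 2
      ≤ ∑ v ∈ Words.below (Fin d) N, ‖f v‖ ^ 2 :=
    Words.sum_below_le_of_dissipation (x := fun v ↦ ‖x v‖ ^ 2) (fun _ ↦ by positivity)
      (by simp [x, Colligation.state]) fun v ↦ hcontr (x v) (f v)
  have hg : ∀ t : Finset (List (Fin d)), ∑ v ∈ t, ‖g v‖ ^ 2 ≤ ‖f‖ ^ 2 := by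
    intro t
    obtain ⟨N, hN⟩ := Words.exists_subset_below t
    calc ∑ v ∈ t, ‖g v‖ ^ 2
        ≤ ∑ v ∈ Words.below (Fin d) N, ‖g v‖ ^ 2 :=
          sum_le_sum_of_subset_of_nonneg hN fun _ _ _ ↦ by positivity
      _ ≤ ∑ v ∈ Words.below (Fin d) N, ‖f v‖ ^ 2 := hbelow N
      _ ≤ ‖f‖ ^ 2 := lp.sum_norm_sq_le_norm_sq f _
  obtain ⟨g', hg'_eq, hg'_norm⟩ := lp.exists_norm_le_of_sum_norm_sq_le g (norm_nonneg f) hg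
  refine ⟨g', fun v ↦ ?_, hg'_norm⟩
  rw [hg'_eq, Colligation.sum_coeff_eq_output A B C D hs0 hsv]

/-- if the colligation `U = [[A,B],[C,D]] : X ⊕ U → X^d ⊕ Y` is a
contraction, then the transfer function `S(z) = D + Σ_j Σ_v C A^v B_j z^{v·j}`
(with coefficients `s_∅ = D`, `s_{v·j} = C A^v B_j`) defines a contractive
multiplication operator `M_S : H²_U(F_d) → H²_Y(F_d)`; i.e. `S` lies in the
noncommutative Schur class.  The contractivity of the block operator is expressed by
the quadratic inequality `Σ_j ‖A_j x + B_j u‖² + ‖C x + D u‖² ≤ ‖x‖² + ‖u‖²`. -/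
theorem transferFunction_schurClass {d : ℕ} {X U Y : Type*}
    [NormedAddCommGroup X] [InnerProductSpace ℂ X] [CompleteSpace X]
    [NormedAddCommGroup U] [InnerProductSpace ℂ U] [CompleteSpace U]
    [NormedAddCommGroup Y] [InnerProductSpace ℂ Y] [CompleteSpace Y]
    (A : Fin d → X →L[ℂ] X) (B : Fin d → U →L[ℂ] X) (C : X →L[ℂ] Y) (D : U →L[ℂ] Y)
    (hcontr : ∀ (x : X) (u : U),
      (∑ j : Fin d, ‖A j x + B j u‖ ^ 2) + ‖C x + D u‖ ^ 2 ≤ ‖x‖ ^ 2 + ‖u‖ ^ 2)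
    (s : List (Fin d) → (U →L[ℂ] Y))
    (hs0 : s [] = D)
    (hsv : ∀ (v : List (Fin d)) (j : Fin d),
      s (v ++ [j]) = C.comp (((v.map A).prod).comp (B j))) :
    ∀ f : lp (fun _ : List (Fin d) => U) 2,
      ∃ g : lp (fun _ : List (Fin d) => Y) 2,
        (∀ v : List (Fin d),
          g v = ∑ i ∈ Finset.range (v.length + 1), s (v.take i) (f (v.drop i))) ∧
        ‖g‖ ≤ ‖f‖ :=
  transferFunction_schurClass_general A B C D hcontr s hs0 hsv
end
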